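/- arXiv:0706.0401 — 2 statements merged into one kernel-verified Lean document; each statement's English description precedes it below -/
import Mathlib

section
/- (Lemma 3 on the Toda lattice.) Let a > 0, let u(n,r,θ) be smooth in (r,θ) for each n ∈ ℤ, let g : ℝ → ℂ be continuous and G : ℝ → ℂ an antiderivative of g (G′ = g), and assume the boundary condition u_r(n,a,θ) = 2n/a + g(θ) for all n ∈ ℤ and θ ∈ ℝ. If φ₁ : ℤ × ℝ → ℂ (differentiable in θ) satisfies equation (V1), then the function φ₄(n,θ) = e^{2inθ + u(n,a,θ) + iaG(θ)}·φ₁(n,θ) satisfies equation (V4). -/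
/-!
Multiplying by the gauge factor `E(n,θ) = e^{2inθ + u(n,a,θ) + iaG(θ)}` exchanges the two
off-diagonal terms of (V1) and (V4): since `E(n+1)/E(n) = e^{2iθ}/ω(n)`, the term `e^{iθ}φ(n+1)`
becomes `e^{-iθ}ω(n)φ(n+1)` and `e^{-iθ}ω(n-1)φ(n-1)` becomes `e^{iθ}φ(n-1)`. Under the boundary
condition `u_r = 2n/a + g`, the logarithmic derivative `2in + u_θ + iag` of `E` turns the
diagonal coefficient of (V1) into that of (V4).
-/

/-- The radial partial derivative `u_r(n, a, θ)`. -/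
noncomputable def uR (u : ℤ → ℝ → ℝ → ℂ) (a : ℝ) (n : ℤ) (θ : ℝ) : ℂ :=
  deriv (fun r : ℝ => u n r θ) a

/-- The angular partial derivative `u_θ(n, a, θ)`. -/
noncomputable def uT (u : ℤ → ℝ → ℝ → ℂ) (a : ℝ) (n : ℤ) (θ : ℝ) : ℂ :=
  deriv (fun t : ℝ => u n a t) θ

/-- `ω(n, a, θ) = exp(u(n,a,θ) − u(n+1,a,θ))`. -/
noncomputable def om (u : ℤ → ℝ → ℝ → ℂ) (a : ℝ) (n : ℤ) (θ : ℝ) : ℂ :=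
  Complex.exp (u n a θ - u (n + 1) a θ)

/-- `u(n,·,·)` is smooth in `(r,θ)` on `{r > 0}` for every `n`. -/
def SmoothOnHalf (u : ℤ → ℝ → ℝ → ℂ) : Prop :=
  ∀ n : ℤ, ContDiffOn ℝ (⊤ : ℕ∞) (fun p : ℝ × ℝ => u n p.1 p.2) {p : ℝ × ℝ | 0 < p.1}

/-- Equation (V1): the θ-part, restricted to `r = a`, of the original Lax pair of the
polar two-dimensional Toda lattice. -/
def V1 (a : ℝ) (u : ℤ → ℝ → ℝ → ℂ) (φ : ℤ → ℝ → ℂ) : Prop :=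
  ∀ (n : ℤ) (θ : ℝ), HasDerivAt (φ n)
    (Complex.I * a * Complex.exp (Complex.I * θ) / 2 * φ (n + 1) θ
      - Complex.I * a / 2 * (uR u a n θ - Complex.I / a * uT u a n θ) * φ n θ
      + Complex.I * a * Complex.exp (-(Complex.I * θ)) / 2 * om u a (n - 1) θ * φ (n - 1) θ) θ

/-- Equation (V2): the θ-part, restricted to `r = a`, of the Lax pair obtained from the
reflection `θ → −θ`. -/
def V2 (a : ℝ) (u : ℤ → ℝ → ℝ → ℂ) (φ : ℤ → ℝ → ℂ) : Prop :=
  ∀ (n : ℤ) (θ : ℝ), HasDerivAt (φ n)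
    (Complex.I * a * Complex.exp (-(Complex.I * θ)) / 2 * φ (n + 1) θ
      - Complex.I * a / 2 * (uR u a n θ + Complex.I / a * uT u a n θ) * φ n θ
      + Complex.I * a * Complex.exp (Complex.I * θ) / 2 * om u a (n - 1) θ * φ (n - 1) θ) θ

/-- Equation (V3): the θ-part, restricted to `r = a`, of the Lax pair obtained from the
Kelvin transformation. -/
def V3 (a : ℝ) (u : ℤ → ℝ → ℝ → ℂ) (φ : ℤ → ℝ → ℂ) : Prop :=
  ∀ (n : ℤ) (θ : ℝ), HasDerivAt (φ n)
    (Complex.I * a * Complex.exp (Complex.I * θ) / 2 * φ (n + 1) θ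
      - Complex.I * a / 2 * (-uR u a n θ + 4 * n / a - Complex.I / a * uT u a n θ) * φ n θ
      + Complex.I * a * Complex.exp (-(Complex.I * θ)) / 2 * om u a (n - 1) θ * φ (n - 1) θ) θ

/-- Equation (V4): the θ-part, restricted to `r = a`, of the Lax pair obtained from the
reflection `ũ(n) = −u(−n)`. -/
def V4 (a : ℝ) (u : ℤ → ℝ → ℝ → ℂ) (φ : ℤ → ℝ → ℂ) : Prop :=
  ∀ (n : ℤ) (θ : ℝ), HasDerivAt (φ n)
    (Complex.I * a * Complex.exp (Complex.I * θ) / 2 * φ (n - 1) θ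
      - Complex.I * a / 2 * (-uR u a n θ + Complex.I / a * uT u a n θ) * φ n θ
      + Complex.I * a * Complex.exp (-(Complex.I * θ)) / 2 * om u a n θ * φ (n + 1) θ) θ

open Complex

noncomputable def gaugeFactor (u : ℤ → ℝ → ℝ → ℂ) (a : ℝ) (G : ℝ → ℂ) (n : ℤ) (θ : ℝ) : ℂ :=
  exp (2 * I * n * θ + u n a θ + I * a * G θ)

theorem exp_neg_mul_om_mul_gaugeFactor_succ (u : ℤ → ℝ → ℝ → ℂ) (a : ℝ) (G : ℝ → ℂ)
    (n : ℤ) (θ : ℝ) :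
    exp (-(I * θ)) * om u a n θ * gaugeFactor u a G (n + 1) θ
      = exp (I * θ) * gaugeFactor u a G n θ := by
  simp only [om, gaugeFactor, ← exp_add]
  congr 1
  push_cast
  ring

theorem SmoothOnHalf.differentiableAt_angular {u : ℤ → ℝ → ℝ → ℂ} (hu : SmoothOnHalf u)
    {a : ℝ} (ha : 0 < a) (n : ℤ) (θ : ℝ) : DifferentiableAt ℝ (fun t : ℝ => u n a t) θ := by
  have hopen : IsOpen {p : ℝ × ℝ | 0 < p.1} := isOpen_lt continuous_const continuous_fst
  have hjoint : DifferentiableAt ℝ (fun p : ℝ × ℝ => u n p.1 p.2) (a, θ) :=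
    ((hu n).contDiffAt (hopen.mem_nhds ha)).differentiableAt (by simp)
  exact hjoint.comp θ ((differentiableAt_const _).prodMk differentiableAt_id)

theorem hasDerivAt_gaugeFactor {u : ℤ → ℝ → ℝ → ℂ} {a : ℝ} {G : ℝ → ℂ} {g : ℂ} {n : ℤ}
    {θ : ℝ} (hu : DifferentiableAt ℝ (fun t : ℝ => u n a t) θ) (hG : HasDerivAt G g θ) :
    HasDerivAt (gaugeFactor u a G n)
      (gaugeFactor u a G n θ * (2 * I * n + uT u a n θ + I * a * g)) θ := by
  have hlin : HasDerivAt (fun t : ℝ => 2 * I * n * (t : ℂ)) (2 * I * n) θ := by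
    simpa using (ofRealCLM.hasDerivAt (x := θ)).const_mul (2 * I * (n : ℂ))
  exact ((hlin.add hu.hasDerivAt).add (hG.const_mul (I * a))).cexp

theorem toda_lemma3_general (a : ℝ) (ha : 0 < a) (u : ℤ → ℝ → ℝ → ℂ) (hu : SmoothOnHalf u)
    (g G : ℝ → ℂ) (hG : ∀ θ : ℝ, HasDerivAt G (g θ) θ)
    (hbc : ∀ (n : ℤ) (θ : ℝ), uR u a n θ = 2 * n / a + g θ)
    (φ₁ : ℤ → ℝ → ℂ) (hφ₁ : V1 a u φ₁) :
    V4 a u (fun n θ =>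
      Complex.exp (2 * Complex.I * n * θ + u n a θ + Complex.I * a * G θ) * φ₁ n θ) := by
  intro n θ
  simp only [← gaugeFactor.eq_def]
  have hE := hasDerivAt_gaugeFactor (hu.differentiableAt_angular ha n θ) (hG θ)
  refine (hE.mul (hφ₁ n θ)).congr_deriv ?_
  have hup := exp_neg_mul_om_mul_gaugeFactor_succ u a G n θ
  have hdown := exp_neg_mul_om_mul_gaugeFactor_succ u a G (n - 1) θ
  rw [sub_add_cancel] at hdown
  have ha' : (a : ℂ) ≠ 0 := by exact_mod_cast ha.ne'
  rw [hbc n θ]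
  field_simp
  linear_combination I * a * (φ₁ (n - 1) θ * hdown - φ₁ (n + 1) θ * hup)
    + 2 * gaugeFactor u a G n θ * uT u a n θ * φ₁ n θ * I_sq

/-- Lemma 3 on the Toda lattice: under the boundary condition
`u_r(n,a,θ) = 2n/a + g(θ)`, if `φ₁` solves (V1) then
`φ₄(n,θ) = e^{2inθ + u(n,a,θ) + iaG(θ)} φ₁(n,θ)` solves (V4), where `G′ = g`. -/
theorem toda_lemma3 (a : ℝ) (ha : 0 < a) (u : ℤ → ℝ → ℝ → ℂ) (hu : SmoothOnHalf u)
    (g G : ℝ → ℂ) (hg : Continuous g) (hG : ∀ θ : ℝ, HasDerivAt G (g θ) θ)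
    (hbc : ∀ (n : ℤ) (θ : ℝ), uR u a n θ = 2 * n / a + g θ)
    (φ₁ : ℤ → ℝ → ℂ) (hφ₁ : V1 a u φ₁) :
    V4 a u (fun n θ =>
      Complex.exp (2 * Complex.I * n * θ + u n a θ + Complex.I * a * G θ) * φ₁ n θ) :=
  toda_lemma3_general a ha u hu g G hG hbc φ₁ hφ₁
end

section
/- (Lemma 6 on the Toda lattice: gauge equivalence of the Kelvin-transformed and n-reflected Lax pairs.) Let a > 0 and let u(n,r,θ) be smooth in (r,θ) for each n ∈ ℤ (no boundary condition is assumed). If φ₃ : ℤ × ℝ → ℂ (differentiable in θ) satisfies equation (V3), then the function φ₄(n,θ) = e^{2inθ + u(n,a,θ)}·φ₃(n,θ) satisfies equation (V4). -/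
/-!
Write `g(n, θ) = e^{2inθ + u(n,a,θ)}` for the gauge factor. Its logarithmic derivative
`2in + u_θ` cancels the term `4n/a` of (V3) and flips the sign of `u_θ` on the diagonal, while
`g(n-1) = e^{-2iθ} ω(n-1) g(n)` and `ω(n) g(n+1) = e^{2iθ} g(n)` exchange the two shift terms
of (V3) for those of (V4).
-/

open Complex

theorem SmoothOnHalf.hasDerivAt_uT {u : ℤ → ℝ → ℝ → ℂ} {a : ℝ} (hu : SmoothOnHalf u)
    (ha : 0 < a) (n : ℤ) (θ : ℝ) : HasDerivAt (fun t => u n a t) (uT u a n θ) θ := by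
  have hopen : IsOpen {p : ℝ × ℝ | 0 < p.1} := isOpen_lt continuous_const continuous_fst
  have hdiff : DifferentiableAt ℝ (fun p : ℝ × ℝ => u n p.1 p.2) (a, θ) :=
    ((hu n).differentiableOn (by simp)).differentiableAt (hopen.mem_nhds ha)
  exact (hdiff.comp θ ((differentiableAt_const a).prodMk differentiableAt_id)).hasDerivAt

section Gauge

variable {u : ℤ → ℝ → ℝ → ℂ} {a : ℝ}

theorem hasDerivAt_exp_gauge (hu : SmoothOnHalf u) (ha : 0 < a) (n : ℤ) (θ : ℝ) :
    HasDerivAt (fun t : ℝ => exp (2 * I * n * t + u n a t))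
      (exp (2 * I * n * θ + u n a θ) * (2 * I * n + uT u a n θ)) θ := by
  have hlin : HasDerivAt (fun t : ℝ => 2 * I * n * (t : ℂ)) (2 * I * n) θ := by
    simpa using (hasDerivAt_id θ).ofReal_comp.const_mul (2 * I * n)
  exact (hlin.add (hu.hasDerivAt_uT ha n θ)).cexp

variable (u a)

theorem exp_gauge_sub_one (n : ℤ) (θ : ℝ) :
    exp (2 * I * ↑(n - 1) * θ + u (n - 1) a θ)
      = exp (2 * I * n * θ + u n a θ) * exp (-(I * θ)) ^ 2 * om u a (n - 1) θ := by
  rw [om, sub_add_cancel, sq, ← exp_add, ← exp_add, ← exp_add]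
  push_cast
  ring_nf

theorem exp_gauge_add_one (n : ℤ) (θ : ℝ) :
    exp (2 * I * ↑(n + 1) * θ + u (n + 1) a θ)
      = exp (2 * I * n * θ + u n a θ) * exp (I * θ) ^ 2 / om u a n θ := by
  rw [om, eq_div_iff (exp_ne_zero _), sq, ← exp_add, ← exp_add, ← exp_add]
  push_cast
  ring_nf

end Gauge

/-- Lemma 6 on the Toda lattice: gauge equivalence of the Kelvin-transformed and
n-reflected Lax pairs. Without any boundary condition, if `φ₃` solves (V3) then
`φ₄(n,θ) = e^{2inθ + u(n,a,θ)} φ₃(n,θ)` solves (V4). -/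
theorem toda_lemma6 (a : ℝ) (ha : 0 < a) (u : ℤ → ℝ → ℝ → ℂ) (hu : SmoothOnHalf u)
    (φ₃ : ℤ → ℝ → ℂ) (hφ₃ : V3 a u φ₃) :
    V4 a u (fun n θ => Complex.exp (2 * Complex.I * n * θ + u n a θ) * φ₃ n θ) := by
  intro n θ
  refine ((hasDerivAt_exp_gauge hu ha n θ).mul (hφ₃ n θ)).congr_deriv ?_
  beta_reduce
  rw [exp_gauge_sub_one, exp_gauge_add_one, exp_neg]
  have ha' : (a : ℂ) ≠ 0 := ofReal_ne_zero.mpr ha.ne'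
  have hω : om u a n θ ≠ 0 := exp_ne_zero _
  field_simp
  ring_nf
  simp only [I_sq]
  ring
end
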